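/- Decoding set entropy lemma (Lemma 1): let W_1,…,W_K be finitely valued, jointly independent random variables with H(W_k) = L_w for all k, and let X_1,…,X_M be finitely valued random variables that are deterministic functions of (W_1,…,W_K). Fix k ∈ {1,…,K} and a subset S ⊆ {1,…,M} with H(W_k | (X_i)_{i∈S}) = 0, and let 𝒥 ⊆ {1,…,K}∖{k}. Then for every s ∈ S: Σ_{i∈S} H(X_i | W_𝒥) ≥ L_w + H(X_s | W_{𝒥∪{k}}), where W_A denotes the tuple (W_j)_{j∈A}. -/
import Mathlib


open scoped BigOperators

noncomputable section

/-- A finite probability space: a finite type together with a probability mass function. -/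
structure FinProbSpace where
  Ω : Type
  [fin : Fintype Ω]
  p : Ω → ℝ
  nonneg : ∀ ω, 0 ≤ p ω
  sum_one : ∑ ω, p ω = 1

attribute [instance] FinProbSpace.fin

namespace FinProbSpace

variable (P : FinProbSpace)

/-- Probability that the random variable `X` takes the value `a`. -/
def prob {α : Type} [DecidableEq α] (X : P.Ω → α) (a : α) : ℝ :=
  ∑ ω, if X ω = a then P.p ω else 0

/-- Shannon entropy (in bits) of a finitely valued random variable. -/
def H {α : Type} [Fintype α] [DecidableEq α] (X : P.Ω → α) : ℝ :=
  ∑ a, -(P.prob X a * Real.logb 2 (P.prob X a))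

/-- Conditional Shannon entropy `H(X | Y) = H(X, Y) - H(Y)` (in bits). -/
def condH {α β : Type} [Fintype α] [DecidableEq α] [Fintype β] [DecidableEq β]
    (X : P.Ω → α) (Y : P.Ω → β) : ℝ :=
  P.H (fun ω => (X ω, Y ω)) - P.H Y

/-- The tuple random variable `(X_i)_{i ∈ ι}`. -/
def tuple {ι V : Type} (X : ι → P.Ω → V) : P.Ω → ι → V := fun ω i => X i ω

/-- Joint (mutual) independence of a finite family of random variables. -/
def iIndep {ι V : Type} [Fintype ι] [DecidableEq ι] [DecidableEq V] (X : ι → P.Ω → V) : Prop :=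
  ∀ a : ι → V, P.prob (P.tuple X) a = ∏ i, P.prob (X i) (a i)

/-- `X` and `Y` contain the same information about everything beyond `Z`:
`H(X | Y, Z) = H(Y | X, Z) = 0`. -/
def sameInfo {α β γ : Type} [Fintype α] [DecidableEq α] [Fintype β] [DecidableEq β]
    [Fintype γ] [DecidableEq γ] (X : P.Ω → α) (Y : P.Ω → β) (Z : P.Ω → γ) : Prop :=
  P.condH X (fun ω => (Y ω, Z ω)) = 0 ∧ P.condH Y (fun ω => (X ω, Z ω)) = 0

end FinProbSpace

/-- A locally decodable code with `K` source symbols of entropy `Lw`, `M` coded symbols of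
entropy `Lx`, and locality `N`. -/
structure LDC (K N M : ℕ) (Lw Lx : ℝ) where
  P : FinProbSpace
  V : Type
  [fV : Fintype V]
  [dV : DecidableEq V]
  V' : Type
  [fV' : Fintype V']
  [dV' : DecidableEq V']
  /-- the source symbols -/
  W : Fin K → P.Ω → V
  /-- the coded symbols -/
  X : Fin M → P.Ω → V'
  indep : P.iIndep W
  HW : ∀ k, P.H (W k) = Lw
  coded_fn : ∀ m, ∃ f : (Fin K → V) → V', ∀ ω, X m ω = f (fun k => W k ω)
  HX : ∀ m, P.H (X m) = Lx
  /-- the decoding supersets -/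
  decSets : Fin K → Finset (Finset (Fin M))
  decSets_nonempty : ∀ k, (decSets k).Nonempty
  decSets_card : ∀ k, ∀ s ∈ decSets k, s.card = N
  decodes : ∀ k, ∀ s ∈ decSets k,
    P.condH (W k) (P.tuple fun i : {x // x ∈ s} => X i.1) = 0

attribute [instance] LDC.fV LDC.dV LDC.fV' LDC.dV'

/-- A universal LDC: every coded symbol appears in some decoding set of every source symbol. -/
def LDC.IsUniversal {K N M : ℕ} {Lw Lx : ℝ} (C : LDC K N M Lw Lx) : Prop :=
  ∀ (m : Fin M) (k : Fin K), ∃ s ∈ C.decSets k, m ∈ s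

/-- A perfectly smooth LDC: for each source symbol, every coded symbol lies in the same
number of decoding sets. -/
def LDC.IsSmooth {K N M : ℕ} {Lw Lx : ℝ} (C : LDC K N M Lw Lx) : Prop :=
  ∀ (k : Fin K) (m m' : Fin M),
    ((C.decSets k).filter (fun s => m ∈ s)).card =
      ((C.decSets k).filter (fun s => m' ∈ s)).card

/-- `C*(N, K) = N (1 + 1/N + ⋯ + 1/N^{K-1})⁻¹`. -/
def Cstar (N K : ℕ) : ℝ := N / (∑ j ∈ Finset.range K, (1 / (N : ℝ)) ^ j)

/-- An `N`-query information retrieval scheme with `K` messages of entropy `Lw` and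
answer sets of sizes `Mn n` with answers of entropy `Lx`. -/
structure IRScheme (K N : ℕ) (Mn : Fin N → ℕ) (Lw Lx : ℝ) where
  P : FinProbSpace
  V : Type
  [fV : Fintype V]
  [dV : DecidableEq V]
  V' : Type
  [fV' : Fintype V']
  [dV' : DecidableEq V']
  /-- the messages -/
  W : Fin K → P.Ω → V
  /-- `A n m` is the `m`-th possible answer of database `n` -/
  A : (n : Fin N) → Fin (Mn n) → P.Ω → V'
  indep : P.iIndep W
  HW : ∀ k, P.H (W k) = Lw
  ans_fn : ∀ n m, ∃ f : (Fin K → V) → V', ∀ ω, A n m ω = f (fun k => W k ω)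
  HA : ∀ n m, P.H (A n m) = Lx
  /-- the decoding supersets: each decoding set consists of one answer index per database -/
  Q : Fin K → Finset ((n : Fin N) → Fin (Mn n))
  Q_nonempty : ∀ k, (Q k).Nonempty
  decodes : ∀ k, ∀ q ∈ Q k, P.condH (W k) (P.tuple fun n => A n (q n)) = 0

attribute [instance] IRScheme.fV IRScheme.dV IRScheme.fV' IRScheme.dV'

/-- A repudiative (RIR_max) scheme: every possible answer of every database appears in some
decoding set of every message. -/
def IRScheme.IsRIR {K N : ℕ} {Mn : Fin N → ℕ} {Lw Lx : ℝ} (C : IRScheme K N Mn Lw Lx) : Prop :=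
  ∀ (n : Fin N) (m : Fin (Mn n)) (k : Fin K), ∃ q ∈ C.Q k, q n = m

/-- A perfectly private (PIR_max) scheme: for each message there is a distribution on its
decoding sets such that the marginal distribution of the query to each database does not
depend on the message. -/
def IRScheme.IsPIR {K N : ℕ} {Mn : Fin N → ℕ} {Lw Lx : ℝ} (C : IRScheme K N Mn Lw Lx) : Prop :=
  ∃ μ : Fin K → ((n : Fin N) → Fin (Mn n)) → ℝ,
    (∀ k q, 0 ≤ μ k q) ∧ (∀ k, ∑ q ∈ C.Q k, μ k q = 1) ∧
    (∀ (k k' : Fin K) (n : Fin N) (m : Fin (Mn n)),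
      ∑ q ∈ (C.Q k).filter (fun q => q n = m), μ k q =
        ∑ q ∈ (C.Q k').filter (fun q => q n = m), μ k' q)

/-- `C_K(N) = (1 + 1/N + ⋯ + 1/N^{K-1})⁻¹`, the capacity of PIR. -/
def CK (N K : ℕ) : ℝ := (∑ j ∈ Finset.range K, (1 / (N : ℝ)) ^ j)⁻¹

namespace FinProbSpace

variable (P : FinProbSpace)

section AuxLemmas

variable {α β γ : Type} [Fintype α] [DecidableEq α] [Fintype β] [DecidableEq β]
  [Fintype γ] [DecidableEq γ]

lemma prob_nonneg {α : Type} [DecidableEq α] (X : P.Ω → α) (a : α) : 0 ≤ P.prob X a :=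
  Finset.sum_nonneg fun ω _ => by by_cases h : X ω = a <;> simp [h, P.nonneg ω]

lemma sum_prob (X : P.Ω → α) : ∑ a, P.prob X a = 1 := by
  unfold prob
  rw [Finset.sum_comm]
  simp only [Finset.sum_ite_eq, Finset.mem_univ, if_true]
  exact P.sum_one

lemma prob_le_of_imp {α β : Type} [DecidableEq α] [DecidableEq β] (X : P.Ω → α) (Y : P.Ω → β)
    (a : α) (b : β) (h : ∀ ω, X ω = a → Y ω = b) : P.prob X a ≤ P.prob Y b := by
  apply Finset.sum_le_sum; intro ω _
  by_cases hx : X ω = a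
  · rw [if_pos hx, if_pos (h ω hx)]
  · rw [if_neg hx]; by_cases hy : Y ω = b <;> simp [hy, P.nonneg ω]

lemma p_le_prob {α : Type} [DecidableEq α] (X : P.Ω → α) (ω₀ : P.Ω) :
    P.p ω₀ ≤ P.prob X (X ω₀) := by
  unfold prob
  have := Finset.single_le_sum (f := fun ω => if X ω = X ω₀ then P.p ω else 0)
    (fun ω _ => by by_cases h : X ω = X ω₀ <;> simp [h, P.nonneg ω]) (Finset.mem_univ ω₀)
  simpa using this

lemma sum_prob_pair_fst (X : P.Ω → α) (Z : P.Ω → γ) (c : γ) :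
    ∑ a, P.prob (fun ω => (X ω, Z ω)) (a, c) = P.prob Z c := by
  unfold prob
  rw [Finset.sum_comm]
  apply Finset.sum_congr rfl; intro ω _
  by_cases h : Z ω = c
  · simp [h, Prod.ext_iff, Finset.sum_ite_eq]
  · simp [h, Prod.ext_iff]

lemma H_eq_sum (X : P.Ω → α) :
    P.H X = ∑ ω, -(P.p ω * Real.logb 2 (P.prob X (X ω))) := by
  unfold H
  have key : ∀ a, -(P.prob X a * Real.logb 2 (P.prob X a))
      = ∑ ω, (if X ω = a then -(P.p ω * Real.logb 2 (P.prob X a)) else 0) := by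
    intro a
    rw [show P.prob X a * Real.logb 2 (P.prob X a)
        = ∑ ω, (if X ω = a then P.p ω * Real.logb 2 (P.prob X a) else 0) by
      rw [prob, Finset.sum_mul]
      apply Finset.sum_congr rfl; intro ω _; split <;> simp]
    rw [← Finset.sum_neg_distrib]
    apply Finset.sum_congr rfl; intro ω _; split <;> simp
  simp_rw [key]
  rw [Finset.sum_comm]
  apply Finset.sum_congr rfl; intro ω _
  rw [Finset.sum_ite_eq, if_pos (Finset.mem_univ _)]

lemma sum_p_mul (X : P.Ω → α) (g : α → ℝ) :
    ∑ a, P.prob X a * g a = ∑ ω, P.p ω * g (X ω) := by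
  unfold prob
  simp_rw [Finset.sum_mul, ite_mul, zero_mul]
  rw [Finset.sum_comm]
  apply Finset.sum_congr rfl; intro ω _
  rw [Finset.sum_ite_eq, if_pos (Finset.mem_univ _)]

lemma H_congr {X : P.Ω → α} {Y : P.Ω → β} (h : ∀ ω ω', X ω = X ω' ↔ Y ω = Y ω') :
    P.H X = P.H Y := by
  rw [H_eq_sum, H_eq_sum]
  apply Finset.sum_congr rfl; intro ω _
  have : P.prob X (X ω) = P.prob Y (Y ω) := by
    unfold prob; apply Finset.sum_congr rfl; intro ω' _
    exact if_congr (h ω' ω) rfl rfl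
  rw [this]

lemma condH_nonneg (X : P.Ω → α) (Y : P.Ω → β) : 0 ≤ P.condH X Y := by
  unfold condH
  rw [H_eq_sum, H_eq_sum, ← Finset.sum_sub_distrib]
  apply Finset.sum_nonneg; intro ω _
  rcases (P.nonneg ω).eq_or_lt with h0 | h0
  · simp [← h0]
  · have h1 : P.p ω ≤ P.prob (fun ω' => (X ω', Y ω')) (X ω, Y ω) := P.p_le_prob _ ω
    have h2 : P.prob (fun ω' => (X ω', Y ω')) (X ω, Y ω) ≤ P.prob Y (Y ω) :=
      P.prob_le_of_imp _ _ _ _ (fun ω' hh => congrArg Prod.snd hh)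
    have h3 : Real.logb 2 (P.prob (fun ω' => (X ω', Y ω')) (X ω, Y ω))
        ≤ Real.logb 2 (P.prob Y (Y ω)) :=
      (Real.logb_le_logb one_lt_two (lt_of_lt_of_le h0 h1)
        ((lt_of_lt_of_le h0 h1).trans_le h2)).mpr h2
    nlinarith

lemma condH_congr_left {X : P.Ω → α} {X' : P.Ω → β} (Z : P.Ω → γ)
    (h : ∀ ω ω', X ω = X ω' ↔ X' ω = X' ω') : P.condH X Z = P.condH X' Z := by
  unfold condH
  rw [P.H_congr (X := fun ω => (X ω, Z ω)) (Y := fun ω => (X' ω, Z ω))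
    (fun ω ω' => by simp only [Prod.ext_iff]; rw [h ω ω'])]

lemma condH_congr_right (X : P.Ω → α) {Z : P.Ω → β} {Z' : P.Ω → γ}
    (h : ∀ ω ω', Z ω = Z ω' ↔ Z' ω = Z' ω') : P.condH X Z = P.condH X Z' := by
  unfold condH
  rw [P.H_congr h, P.H_congr (X := fun ω => (X ω, Z ω)) (Y := fun ω => (X ω, Z' ω))
    (fun ω ω' => by simp only [Prod.ext_iff]; rw [h ω ω'])]

lemma condH_eq_zero_of_det {X : P.Ω → α} {Z : P.Ω → β}
    (h : ∀ ω ω', Z ω = Z ω' → X ω = X ω') : P.condH X Z = 0 := by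
  unfold condH
  rw [P.H_congr (X := fun ω => (X ω, Z ω)) (Y := Z)
    (fun ω ω' => by
      simp only [Prod.ext_iff]
      exact ⟨fun hh => hh.2, fun hz => ⟨h ω ω' hz, hz⟩⟩)]
  ring

lemma condH_chain (X : P.Ω → α) (Y : P.Ω → β) (Z : P.Ω → γ) :
    P.condH (fun ω => (X ω, Y ω)) Z = P.condH X Z + P.condH Y (fun ω => (X ω, Z ω)) := by
  unfold condH
  rw [P.H_congr (X := fun ω => ((X ω, Y ω), Z ω)) (Y := fun ω => (Y ω, (X ω, Z ω)))
    (fun ω ω' => by simp only [Prod.ext_iff]; tauto)]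
  ring

lemma gibbs_aux {ι : Type} [Fintype ι] (p q : ι → ℝ) (hp : ∀ i, 0 ≤ p i)
    (hq : ∀ i, 0 ≤ q i) (hpq : ∀ i, 0 < p i → 0 < q i) (hs : ∑ i, q i ≤ ∑ i, p i) :
    ∑ i, p i * (Real.logb 2 (q i) - Real.logb 2 (p i)) ≤ 0 := by
  have hlog2 : 0 < Real.log 2 := Real.log_pos one_lt_two
  have key : ∀ i, p i * (Real.logb 2 (q i) - Real.logb 2 (p i)) ≤ (q i - p i) / Real.log 2 := by
    intro i
    rcases (hp i).eq_or_lt with h0 | h0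
    · rw [← h0, zero_mul, sub_zero]
      exact div_nonneg (hq i) hlog2.le
    · have hqi := hpq i h0
      have hl : Real.log (q i / p i) ≤ q i / p i - 1 :=
        Real.log_le_sub_one_of_pos (by positivity)
      have h2 : p i * Real.log (q i / p i) ≤ q i - p i := by
        have hm := mul_le_mul_of_nonneg_left hl h0.le
        have heq : p i * (q i / p i - 1) = q i - p i := by field_simp
        linarith
      rw [Real.logb, Real.logb, div_sub_div_same,
        ← Real.log_div (ne_of_gt hqi) (ne_of_gt h0), ← mul_div_assoc]
      exact (div_le_div_iff_of_pos_right hlog2).mpr h2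
  calc ∑ i, p i * (Real.logb 2 (q i) - Real.logb 2 (p i))
      ≤ ∑ i, (q i - p i) / Real.log 2 := Finset.sum_le_sum fun i _ => key i
    _ = ((∑ i, q i) - (∑ i, p i)) / Real.log 2 := by
        rw [← Finset.sum_div, Finset.sum_sub_distrib]
    _ ≤ 0 := div_nonpos_of_nonpos_of_nonneg (by linarith) hlog2.le

lemma condH_cond_pair_le (X : P.Ω → α) (Y : P.Ω → β) (Z : P.Ω → γ) :
    P.condH X (fun ω => (Y ω, Z ω)) ≤ P.condH X Z := by
  rw [← sub_nonpos]
  unfold condH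
  rw [H_eq_sum, H_eq_sum, H_eq_sum, H_eq_sum]
  rw [← Finset.sum_sub_distrib, ← Finset.sum_sub_distrib, ← Finset.sum_sub_distrib]
  set q : α × β × γ → ℝ := fun t =>
    if P.prob Z t.2.2 = 0 then 0
    else P.prob (fun ω => (Y ω, Z ω)) t.2 * P.prob (fun ω => (X ω, Z ω)) (t.1, t.2.2)
      / P.prob Z t.2.2 with hqdef
  have hrw : ∑ ω, (-(P.p ω * Real.logb 2 (P.prob (fun ω => (X ω, Y ω, Z ω)) (X ω, Y ω, Z ω)))
        - -(P.p ω * Real.logb 2 (P.prob (fun ω => (Y ω, Z ω)) (Y ω, Z ω)))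
        - (-(P.p ω * Real.logb 2 (P.prob (fun ω => (X ω, Z ω)) (X ω, Z ω)))
          - -(P.p ω * Real.logb 2 (P.prob Z (Z ω)))))
      = ∑ t, P.prob (fun ω => (X ω, Y ω, Z ω)) t
          * (Real.logb 2 (P.prob (fun ω => (Y ω, Z ω)) t.2)
            + Real.logb 2 (P.prob (fun ω => (X ω, Z ω)) (t.1, t.2.2))
            - Real.logb 2 (P.prob Z t.2.2)
            - Real.logb 2 (P.prob (fun ω => (X ω, Y ω, Z ω)) t)) := by
    rw [P.sum_p_mul (fun ω => (X ω, Y ω, Z ω))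
      (fun t => Real.logb 2 (P.prob (fun ω => (Y ω, Z ω)) t.2)
        + Real.logb 2 (P.prob (fun ω => (X ω, Z ω)) (t.1, t.2.2))
        - Real.logb 2 (P.prob Z t.2.2)
        - Real.logb 2 (P.prob (fun ω => (X ω, Y ω, Z ω)) t))]
    apply Finset.sum_congr rfl; intro ω _
    dsimp only
    ring
  beta_reduce
  rw [hrw]
  have heach : ∀ t, P.prob (fun ω => (X ω, Y ω, Z ω)) t
      * (Real.logb 2 (P.prob (fun ω => (Y ω, Z ω)) t.2)
        + Real.logb 2 (P.prob (fun ω => (X ω, Z ω)) (t.1, t.2.2))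
        - Real.logb 2 (P.prob Z t.2.2)
        - Real.logb 2 (P.prob (fun ω => (X ω, Y ω, Z ω)) t))
      = P.prob (fun ω => (X ω, Y ω, Z ω)) t
        * (Real.logb 2 (q t) - Real.logb 2 (P.prob (fun ω => (X ω, Y ω, Z ω)) t)) := by
    intro t
    rcases (P.prob_nonneg (fun ω => (X ω, Y ω, Z ω)) t).eq_or_lt with h0 | h0
    · rw [← h0]; ring
    · have hz : 0 < P.prob Z t.2.2 :=
        lt_of_lt_of_le h0 (P.prob_le_of_imp _ _ _ _
          (fun ω hh => by rw [show Z ω = (X ω, Y ω, Z ω).2.2 from rfl, hh]))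
      have hyz : 0 < P.prob (fun ω => (Y ω, Z ω)) t.2 :=
        lt_of_lt_of_le h0 (P.prob_le_of_imp _ _ _ _
          (fun ω hh => by rw [show (Y ω, Z ω) = (X ω, Y ω, Z ω).2 from rfl, hh]))
      have hxz : 0 < P.prob (fun ω => (X ω, Z ω)) (t.1, t.2.2) :=
        lt_of_lt_of_le h0 (P.prob_le_of_imp _ _ _ _
          (fun ω hh => by rw [show (X ω, Z ω) = ((X ω, Y ω, Z ω).1, (X ω, Y ω, Z ω).2.2) from rfl,
            hh]))
      have hq : q t = P.prob (fun ω => (Y ω, Z ω)) t.2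
          * P.prob (fun ω => (X ω, Z ω)) (t.1, t.2.2) / P.prob Z t.2.2 := by
        rw [hqdef]; simp only [if_neg (ne_of_gt hz)]
      rw [hq, Real.logb_div (by positivity) (ne_of_gt hz),
        Real.logb_mul (ne_of_gt hyz) (ne_of_gt hxz)]
  rw [Finset.sum_congr rfl (fun t _ => heach t)]
  apply gibbs_aux
  · exact fun t => P.prob_nonneg _ t
  · intro t; rw [hqdef]; dsimp only; split
    · exact le_rfl
    · exact div_nonneg (mul_nonneg (P.prob_nonneg _ _) (P.prob_nonneg _ _)) (P.prob_nonneg _ _)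
  · intro t ht
    have hz : 0 < P.prob Z t.2.2 :=
      lt_of_lt_of_le ht (P.prob_le_of_imp _ _ _ _
        (fun ω hh => by rw [show Z ω = (X ω, Y ω, Z ω).2.2 from rfl, hh]))
    have hyz : 0 < P.prob (fun ω => (Y ω, Z ω)) t.2 :=
      lt_of_lt_of_le ht (P.prob_le_of_imp _ _ _ _
        (fun ω hh => by rw [show (Y ω, Z ω) = (X ω, Y ω, Z ω).2 from rfl, hh]))
    have hxz : 0 < P.prob (fun ω => (X ω, Z ω)) (t.1, t.2.2) :=
      lt_of_lt_of_le ht (P.prob_le_of_imp _ _ _ _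
        (fun ω hh => by rw [show (X ω, Z ω) = ((X ω, Y ω, Z ω).1, (X ω, Y ω, Z ω).2.2) from rfl,
          hh]))
    rw [hqdef]; dsimp only; rw [if_neg (ne_of_gt hz)]
    positivity
  · rw [P.sum_prob (fun ω => (X ω, Y ω, Z ω))]
    rw [Fintype.sum_prod_type, Finset.sum_comm]
    have hin : ∀ u : β × γ, ∑ a, q (a, u) ≤ P.prob (fun ω => (Y ω, Z ω)) u := by
      intro u
      by_cases hz : P.prob Z u.2 = 0
      · simp only [hqdef, hz, if_pos rfl]
        simp [P.prob_nonneg (fun ω => (Y ω, Z ω)) u]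
      · have : ∑ a, q (a, u) = P.prob (fun ω => (Y ω, Z ω)) u := by
          simp only [hqdef, if_neg hz]
          rw [← Finset.sum_div, ← Finset.mul_sum,
            P.sum_prob_pair_fst X Z u.2]
          field_simp
        rw [this]
    calc ∑ u : β × γ, ∑ a, q (a, u) ≤ ∑ u, P.prob (fun ω => (Y ω, Z ω)) u :=
          Finset.sum_le_sum fun u _ => hin u
      _ = 1 := P.sum_prob _

lemma H_unit (U : P.Ω → Unit) : P.H U = 0 := by
  have h1 : P.prob U () = 1 := by unfold prob; simpa using P.sum_one
  unfold H
  rw [show (Finset.univ : Finset Unit) = {()} from rfl, Finset.sum_singleton, h1]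
  simp

lemma condH_unit (X : P.Ω → α) : P.condH X (fun _ => ()) = P.H X := by
  unfold condH
  rw [P.H_unit, P.H_congr (X := fun ω => (X ω, ())) (Y := X)
    (fun ω ω' => by simp [Prod.ext_iff])]
  ring

lemma condH_le_H (X : P.Ω → α) (Z : P.Ω → β) : P.condH X Z ≤ P.H X := by
  have h1 : P.condH X Z = P.condH X (fun ω => (Z ω, ())) :=
    P.condH_congr_right _ (fun ω ω' => by simp [Prod.ext_iff])
  rw [h1, ← P.condH_unit X]
  exact P.condH_cond_pair_le X Z (fun _ => ())

lemma H_pair_le (X : P.Ω → α) (Y : P.Ω → β) :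
    P.H (fun ω => (X ω, Y ω)) ≤ P.H X + P.H Y := by
  have h := P.condH_le_H X Y; unfold condH at h; linarith

lemma condH_comp_le {α' : Type} [Fintype α'] [DecidableEq α'] (X : P.Ω → α) (Z : P.Ω → β)
    (f : α → α') : P.condH (fun ω => f (X ω)) Z ≤ P.condH X Z := by
  unfold condH
  have h0 := P.condH_nonneg (fun ω => (X ω, Z ω)) (fun ω => (f (X ω), Z ω))
  unfold condH at h0
  have h1 : P.H (fun ω => ((X ω, Z ω), (f (X ω), Z ω))) = P.H (fun ω => (X ω, Z ω)) :=
    P.H_congr (fun ω ω' => by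
      simp only [Prod.ext_iff]
      exact ⟨fun h => h.1, fun h => ⟨h, by rw [h.1], h.2⟩⟩)
  linarith

lemma condH_pair_le (X : P.Ω → α) (Y : P.Ω → β) (Z : P.Ω → γ) :
    P.condH (fun ω => (X ω, Y ω)) Z ≤ P.condH X Z + P.condH Y Z := by
  rw [P.condH_chain X Y Z]
  have h2 : P.condH Y (fun ω => (X ω, Z ω)) ≤ P.condH Y Z := P.condH_cond_pair_le Y X Z
  linarith

lemma condH_tuple_le_sum {ι V' : Type} [DecidableEq ι] [Fintype V'] [DecidableEq V']
    (S : Finset ι) (X : ι → P.Ω → V') (Z : P.Ω → γ) :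
    P.condH (P.tuple fun i : {x // x ∈ S} => X i.1) Z ≤ ∑ i ∈ S, P.condH (X i) Z := by
  classical
  induction S using Finset.induction_on with
  | empty =>
    rw [Finset.sum_empty]
    exact le_of_eq (P.condH_eq_zero_of_det
      (fun ω ω' _ => funext fun i => (Finset.notMem_empty i.1 i.2).elim))
  | @insert a S' ha ih =>
    rw [Finset.sum_insert ha]
    have e1 : P.condH (P.tuple fun i : {x // x ∈ insert a S'} => X i.1) Z
        = P.condH (fun ω => (X a ω, P.tuple (fun i : {x // x ∈ S'} => X i.1) ω)) Z := by
      apply P.condH_congr_left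
      intro ω ω'
      simp only [Prod.ext_iff]
      constructor
      · intro h
        have h' := congrFun h
        exact ⟨h' ⟨a, Finset.mem_insert_self a S'⟩,
          funext fun i => h' ⟨i.1, Finset.mem_insert_of_mem i.2⟩⟩
      · rintro ⟨h1, h2⟩
        funext i
        rcases Finset.mem_insert.mp i.2 with h | h
        · show X i.1 ω = X i.1 ω'; rw [h]; exact h1
        · exact congrFun h2 ⟨i.1, h⟩
    calc P.condH (P.tuple fun i : {x // x ∈ insert a S'} => X i.1) Z
        = P.condH (fun ω => (X a ω, P.tuple (fun i : {x // x ∈ S'} => X i.1) ω)) Z := e1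
      _ ≤ P.condH (X a) Z + P.condH (P.tuple fun i : {x // x ∈ S'} => X i.1) Z :=
          P.condH_pair_le _ _ _
      _ ≤ P.condH (X a) Z + ∑ i ∈ S', P.condH (X i) Z := by linarith [ih]

lemma H_tuple_le_sum {ι V' : Type} [DecidableEq ι] [Fintype V'] [DecidableEq V']
    (S : Finset ι) (X : ι → P.Ω → V') :
    P.H (P.tuple fun i : {x // x ∈ S} => X i.1) ≤ ∑ i ∈ S, P.H (X i) := by
  have h := P.condH_tuple_le_sum S X (fun _ => ())
  rw [P.condH_unit] at h
  refine h.trans (Finset.sum_le_sum fun i _ => le_of_eq (P.condH_unit _))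

lemma H_indep {K : ℕ} {V : Type} [Fintype V] [DecidableEq V] (W : Fin K → P.Ω → V)
    (h : P.iIndep W) : P.H (P.tuple W) = ∑ j, P.H (W j) := by
  classical
  unfold H
  have key : ∀ a : Fin K → V, -(P.prob (P.tuple W) a * Real.logb 2 (P.prob (P.tuple W) a))
      = ∑ j, (∏ i, P.prob (W i) (a i)) * (-(Real.logb 2 (P.prob (W j) (a j)))) := by
    intro a
    rw [h a]
    by_cases hz : ∏ i, P.prob (W i) (a i) = 0
    · simp [hz]
    · rw [Real.logb_prod _ _ (fun i _ => fun h0 => hz (Finset.prod_eq_zero (Finset.mem_univ i) h0))]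
      rw [Finset.mul_sum, ← Finset.sum_neg_distrib]
      apply Finset.sum_congr rfl; intro j _; ring
  simp_rw [key]
  rw [Finset.sum_comm]
  apply Finset.sum_congr rfl; intro j _
  set f : Fin K → V → ℝ := fun i x =>
    if i = j then P.prob (W j) x * (-(Real.logb 2 (P.prob (W j) x))) else P.prob (W i) x with hf
  have hsplit : ∀ a : Fin K → V,
      (∏ i, P.prob (W i) (a i)) * (-(Real.logb 2 (P.prob (W j) (a j)))) = ∏ i, f i (a i) := by
    intro a
    rw [← Finset.mul_prod_erase Finset.univ (fun i => P.prob (W i) (a i)) (Finset.mem_univ j),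
        ← Finset.mul_prod_erase Finset.univ (fun i => f i (a i)) (Finset.mem_univ j)]
    rw [Finset.prod_congr rfl
      (fun i hi => show f i (a i) = P.prob (W i) (a i) by
        rw [hf]; dsimp only; rw [if_neg (Finset.ne_of_mem_erase hi)])]
    rw [hf]; dsimp only; rw [if_pos rfl]
    ring
  simp_rw [hsplit]
  rw [← Fintype.piFinset_univ, ← Finset.prod_univ_sum]
  rw [← Finset.mul_prod_erase Finset.univ (fun i => ∑ x, f i x) (Finset.mem_univ j)]
  have h1 : ∑ x, f j x = ∑ x, -(P.prob (W j) x * Real.logb 2 (P.prob (W j) x)) := by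
    apply Finset.sum_congr rfl
    intro x _
    rw [hf]
    dsimp only
    rw [if_pos rfl]
    ring
  have h2 : ∀ i ∈ Finset.univ.erase j, ∑ x, f i x = 1 := by
    intro i hi
    rw [hf]; dsimp only; simp only [if_neg (Finset.ne_of_mem_erase hi)]
    exact P.sum_prob _
  rw [h1, Finset.prod_congr rfl h2, Finset.prod_const_one, mul_one]

lemma condH_indep_ge {K : ℕ} {V : Type} [Fintype V] [DecidableEq V] (W : Fin K → P.Ω → V)
    (h : P.iIndep W) (k : Fin K) (J : Finset (Fin K)) (hk : k ∉ J) :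
    P.H (W k) ≤ P.condH (W k) (P.tuple fun j : {x // x ∈ J} => W j.1) := by
  classical
  set C := P.tuple fun j : {x // x ∈ J} => W j.1 with hC
  set E := P.tuple fun j : {x // x ∈ (insert k J)ᶜ} => W j.1 with hE
  have hfull : P.H (P.tuple W) = ∑ j, P.H (W j) := P.H_indep W h
  have hsplit : P.H (P.tuple W) = P.H (fun ω => ((W k ω, C ω), E ω)) := by
    apply P.H_congr
    intro ω ω'
    simp only [Prod.ext_iff]
    constructor
    · intro hh
      have h' := congrFun hh
      exact ⟨⟨h' k, funext fun j => h' j.1⟩, funext fun j => h' j.1⟩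
    · rintro ⟨⟨h1, h2⟩, h3⟩
      funext i
      by_cases hik : i = k
      · show W i ω = W i ω'; rw [hik]; exact h1
      · by_cases hiJ : i ∈ J
        · exact congrFun h2 ⟨i, hiJ⟩
        · exact congrFun h3 ⟨i, by simp [hik, hiJ]⟩
  have h1 : P.H (fun ω => ((W k ω, C ω), E ω)) ≤ P.H (fun ω => (W k ω, C ω)) + P.H E :=
    P.H_pair_le _ _
  have h2 : P.H E ≤ ∑ i ∈ (insert k J)ᶜ, P.H (W i) := P.H_tuple_le_sum _ W
  have h3 : P.H C ≤ ∑ i ∈ J, P.H (W i) := P.H_tuple_le_sum J W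
  have h4 : P.H (W k) + ∑ i ∈ J, P.H (W i) + ∑ i ∈ (insert k J)ᶜ, P.H (W i)
      = ∑ j, P.H (W j) := by
    rw [← Finset.sum_add_sum_compl (insert k J) (fun j => P.H (W j)),
      Finset.sum_insert hk]
  unfold condH
  linarith

end AuxLemmas

end FinProbSpace

/-- Decoding set entropy lemma, Lemma 1: if `W_1, …, W_K` are jointly
independent with `H(W_k) = Lw`, the `X_i` are deterministic functions of `(W_1, …, W_K)`,
`S` is a set of coded symbols from which `W_k` is decodable, `𝒥 ⊆ {1,…,K} \ {k}`, and
`s ∈ S`, then `∑_{i ∈ S} H(X_i | W_𝒥) ≥ Lw + H(X_s | W_{𝒥 ∪ {k}})`. -/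
theorem decoding_set_entropy_lemma (P : FinProbSpace) (K M : ℕ)
    (V V' : Type) [Fintype V] [DecidableEq V] [Fintype V'] [DecidableEq V'] (Lw : ℝ)
    (W : Fin K → P.Ω → V) (X : Fin M → P.Ω → V')
    (hindep : P.iIndep W) (hHW : ∀ k, P.H (W k) = Lw)
    (hfn : ∀ m, ∃ f : (Fin K → V) → V', ∀ ω, X m ω = f (fun k => W k ω))
    (k : Fin K) (S : Finset (Fin M))
    (hdec : P.condH (W k) (P.tuple fun i : {x // x ∈ S} => X i.1) = 0)
    (J : Finset (Fin K)) (hJ : k ∉ J) (s : Fin M) (hs : s ∈ S) :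
    Lw + P.condH (X s) (P.tuple fun j : {x // x ∈ insert k J} => W j.1) ≤
      ∑ i ∈ S, P.condH (X i) (P.tuple fun j : {x // x ∈ J} => W j.1) := by
  classical
  set A := P.tuple fun i : {x // x ∈ S} => X i.1 with hA
  set C := P.tuple fun j : {x // x ∈ J} => W j.1 with hC
  set D := P.tuple fun j : {x // x ∈ insert k J} => W j.1 with hD
  have h1 : P.condH A C ≤ ∑ i ∈ S, P.condH (X i) C := P.condH_tuple_le_sum S X C
  have hdec' : P.condH (W k) (fun ω => (A ω, C ω)) = 0 := by
    refine le_antisymm ?_ (P.condH_nonneg _ _)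
    have hswap : P.condH (W k) (fun ω => (A ω, C ω)) = P.condH (W k) (fun ω => (C ω, A ω)) :=
      P.condH_congr_right _ (fun ω ω' => by simp only [Prod.ext_iff]; tauto)
    rw [hswap]
    calc P.condH (W k) (fun ω => (C ω, A ω)) ≤ P.condH (W k) A := P.condH_cond_pair_le _ _ _
      _ = 0 := hdec
  have h2 : P.condH (fun ω => (A ω, W k ω)) C = P.condH A C := by
    rw [P.condH_chain A (W k) C, hdec', add_zero]
  have h3 : P.condH (fun ω => (A ω, W k ω)) C
      = P.condH (W k) C + P.condH A (fun ω => (W k ω, C ω)) := by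
    rw [show P.condH (fun ω => (A ω, W k ω)) C = P.condH (fun ω => (W k ω, A ω)) C from
      P.condH_congr_left _ (fun ω ω' => by simp only [Prod.ext_iff]; tauto)]
    exact P.condH_chain (W k) A C
  have h4 : Lw ≤ P.condH (W k) C := by
    rw [← hHW k]; exact P.condH_indep_ge W hindep k J hJ
  have h5 : P.condH (X s) (fun ω => (W k ω, C ω)) ≤ P.condH A (fun ω => (W k ω, C ω)) := by
    have hXs : (fun ω => (A ω) ⟨s, hs⟩) = X s := by funext ω; rw [hA]; rfl
    rw [← hXs]
    exact P.condH_comp_le A (fun ω => (W k ω, C ω)) (fun g => g ⟨s, hs⟩)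
  have h6 : P.condH (X s) D = P.condH (X s) (fun ω => (W k ω, C ω)) := by
    apply P.condH_congr_right
    intro ω ω'
    simp only [Prod.ext_iff]
    constructor
    · intro hh
      have h' := congrFun hh
      exact ⟨h' ⟨k, Finset.mem_insert_self k J⟩,
        funext fun j => h' ⟨j.1, Finset.mem_insert_of_mem j.2⟩⟩
    · rintro ⟨hk1, hk2⟩
      funext j
      rcases Finset.mem_insert.mp j.2 with hj | hj
      · show W j.1 ω = W j.1 ω'; rw [hj]; exact hk1
      · exact congrFun hk2 ⟨j.1, hj⟩
  linarith
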